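/- arXiv:1606.03799 — 2 statements merged into one kernel-verified Lean document; each statement's English description precedes it below -/
import Mathlib

section
/- Every rank 2 quiver (quiver on 2 mutable vertices) has a maximal green sequence: if Q has vertices 1 and 2 with all arrows from 1 to 2 (possibly many, or none), then the sequence (1, 2) is a maximal green sequence for Q. -/
/-!  Quivers are encoded as skew-symmetric integer matrices `B : Matrix V V ℤ`,
where `B i j` is the number of arrows `i → j` minus the number of arrows `j → i`.
Framed quivers are encoded as extended matrices `Matrix (V ⊕ V) V ℤ`:
rows `Sum.inl a` are the mutable vertices, rows `Sum.inr a` are the frozen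
vertices `a'`; the entry at `(Sum.inr a, j)` is the signed number of arrows
between the frozen vertex `a'` and the mutable vertex `j` (positive meaning
`a' → j`).  Mutation is Fomin–Zelevinsky matrix mutation. -/

/-- Fomin–Zelevinsky matrix mutation of a square (skew-symmetric) matrix
at a vertex `k`. -/
def mutate {V : Type} [DecidableEq V] (B : Matrix V V ℤ) (k : V) : Matrix V V ℤ :=
  Matrix.of fun i j =>
    if i = k ∨ j = k then -B i j
    else B i j + (|B i k| * B k j + B i k * |B k j|) / 2

/-- Fomin–Zelevinsky matrix mutation of an extended (framed) matrix at a
mutable vertex `k`. -/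
def emut {V : Type} [DecidableEq V] (B : Matrix (V ⊕ V) V ℤ) (k : V) :
    Matrix (V ⊕ V) V ℤ :=
  Matrix.of fun i j =>
    if i = Sum.inl k ∨ j = k then -B i j
    else B i j + (|B i k| * B (Sum.inl k) j + B i k * |B (Sum.inl k) j|) / 2

/-- The framed quiver `Q̂` of `Q`: to each mutable vertex `j` we attach a frozen
vertex `j'` and an arrow `j → j'`; with our sign convention (entry
`(Sum.inr a, j)` positive means `a' → j`) the frozen block is minus the
identity matrix. -/
def framed {V : Type} [DecidableEq V] (B : Matrix V V ℤ) :
    Matrix (V ⊕ V) V ℤ :=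
  Matrix.of fun i j =>
    match i with
    | Sum.inl a => B a j
    | Sum.inr a => if a = j then (-1 : ℤ) else 0

/-- A mutable vertex `i` is green if no frozen vertex has an arrow into `i`. -/
def IsGreen {V : Type} (B : Matrix (V ⊕ V) V ℤ) (i : V) : Prop :=
  ∀ j, B (Sum.inr j) i ≤ 0

/-- A mutable vertex `i` is red if it has no arrow into any frozen vertex. -/
def IsRed {V : Type} (B : Matrix (V ⊕ V) V ℤ) (i : V) : Prop :=
  ∀ j, 0 ≤ B (Sum.inr j) i

/-- A green sequence: each mutation is performed at a vertex which is green
at that stage. -/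
def IsGreenSeq {V : Type} [DecidableEq V] :
    Matrix (V ⊕ V) V ℤ → List V → Prop
  | _, [] => True
  | B, k :: l => IsGreen B k ∧ IsGreenSeq (emut B k) l

/-- A maximal green sequence for `Q`: a green sequence for the framed quiver
`Q̂` after which every mutable vertex is red. -/
def IsMaximalGreenSeq {V : Type} [DecidableEq V] (B : Matrix V V ℤ)
    (l : List V) : Prop :=
  IsGreenSeq (framed B) l ∧ ∀ i, IsRed (l.foldl emut (framed B)) i

/-- Mutation equivalence: `C` is obtained from `B` by a finite sequence of
mutations. -/
def MutEquiv {V : Type} [DecidableEq V] (B C : Matrix V V ℤ) : Prop :=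
  ∃ l : List V, C = l.foldl mutate B

/-- The oriented `n`-cycle quiver: arrows `i → i - 1` (cyclically). -/
def cyc (n : ℕ) : Matrix (Fin n) (Fin n) ℤ :=
  Matrix.of fun a b =>
    (if ((a : ℕ) : ZMod n) = ((b : ℕ) : ZMod n) + 1 then (1 : ℤ) else 0) -
    (if ((b : ℕ) : ZMod n) = ((a : ℕ) : ZMod n) + 1 then (1 : ℤ) else 0)

/-- Every rank 2 quiver, with all arrows from vertex `0` to
vertex `1` (possibly many, or none), has `(0, 1)` as a maximal green
sequence. -/
theorem rank_two_has_mgs (b : ℤ) (hb : 0 ≤ b) :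
    IsMaximalGreenSeq !![0, b; -b, 0] [(0 : Fin 2), 1] := by
  constructor
  · refine ⟨?_, ?_, trivial⟩
    · intro j; fin_cases j <;> simp [framed, IsGreen, Matrix.of_apply]
    · intro j; fin_cases j <;>
        simp [emut, framed, IsGreen, Matrix.of_apply, abs_of_nonneg hb, Matrix.cons_val_zero, Matrix.cons_val_one, Matrix.head_cons]
  · intro i j
    fin_cases i <;> fin_cases j <;>
      simp [List.foldl, emut, framed, IsRed, Matrix.of_apply, abs_of_nonneg hb, Matrix.cons_val_zero, Matrix.cons_val_one, Matrix.head_cons]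
end

section
/- For the quiver that is a disjoint union of two quivers Q1 and Q2 (no arrows between them), a maximal green sequence exists if and only if both Q1 and Q2 have maximal green sequences; moreover concatenating a maximal green sequence of Q1 with one of Q2 gives a maximal green sequence of the disjoint union. -/
section Aux

/-! A green or red test at a vertex of one component only reads the frozen rows of that component,
and mutating at a vertex of one component leaves the other component and its frozen copies unchanged.
Hence the framed quiver of the disjoint union stays, along any mutation sequence, the disjoint union
of the framed components mutated along the two subsequences of vertices from `Q₁` and from `Q₂`; a
sequence is maximal green for the union exactly when both subsequences are maximal green. -/

section DisjointUnion

variable {V₁ V₂ : Type}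

def extSum (E₁ : Matrix (V₁ ⊕ V₁) V₁ ℤ) (E₂ : Matrix (V₂ ⊕ V₂) V₂ ℤ) :
    Matrix ((V₁ ⊕ V₂) ⊕ (V₁ ⊕ V₂)) (V₁ ⊕ V₂) ℤ :=
  Matrix.of fun i j =>
    match i, j with
    | Sum.inl (Sum.inl a), Sum.inl j => E₁ (Sum.inl a) j
    | Sum.inr (Sum.inl a), Sum.inl j => E₁ (Sum.inr a) j
    | Sum.inl (Sum.inr a), Sum.inr j => E₂ (Sum.inl a) j
    | Sum.inr (Sum.inr a), Sum.inr j => E₂ (Sum.inr a) j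
    | _, _ => 0

theorem isGreen_extSum_inl {E₁ : Matrix (V₁ ⊕ V₁) V₁ ℤ} {E₂ : Matrix (V₂ ⊕ V₂) V₂ ℤ} (i : V₁) :
    IsGreen (extSum E₁ E₂) (Sum.inl i) ↔ IsGreen E₁ i := by
  simp [IsGreen, Sum.forall, extSum]

theorem isGreen_extSum_inr {E₁ : Matrix (V₁ ⊕ V₁) V₁ ℤ} {E₂ : Matrix (V₂ ⊕ V₂) V₂ ℤ} (i : V₂) :
    IsGreen (extSum E₁ E₂) (Sum.inr i) ↔ IsGreen E₂ i := by
  simp [IsGreen, Sum.forall, extSum]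

theorem forall_isRed_extSum_iff {E₁ : Matrix (V₁ ⊕ V₁) V₁ ℤ} {E₂ : Matrix (V₂ ⊕ V₂) V₂ ℤ} :
    (∀ i, IsRed (extSum E₁ E₂) i) ↔ (∀ i, IsRed E₁ i) ∧ ∀ i, IsRed E₂ i := by
  simp [IsRed, Sum.forall, extSum]

variable [DecidableEq V₁] [DecidableEq V₂]

theorem framed_fromBlocks (B₁ : Matrix V₁ V₁ ℤ) (B₂ : Matrix V₂ V₂ ℤ) :
    framed (Matrix.fromBlocks B₁ 0 0 B₂) = extSum (framed B₁) (framed B₂) := by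
  ext ((i | i) | (i | i)) (j | j) <;> simp [framed, extSum, Matrix.fromBlocks]

theorem emut_extSum_inl (E₁ : Matrix (V₁ ⊕ V₁) V₁ ℤ) (E₂ : Matrix (V₂ ⊕ V₂) V₂ ℤ) (k : V₁) :
    emut (extSum E₁ E₂) (Sum.inl k) = extSum (emut E₁ k) E₂ := by
  ext ((i | i) | (i | i)) (j | j) <;> simp [emut, extSum]

theorem emut_extSum_inr (E₁ : Matrix (V₁ ⊕ V₁) V₁ ℤ) (E₂ : Matrix (V₂ ⊕ V₂) V₂ ℤ) (k : V₂) :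
    emut (extSum E₁ E₂) (Sum.inr k) = extSum E₁ (emut E₂ k) := by
  ext ((i | i) | (i | i)) (j | j) <;> simp [emut, extSum]

theorem foldl_emut_extSum (l : List (V₁ ⊕ V₂)) (E₁ : Matrix (V₁ ⊕ V₁) V₁ ℤ)
    (E₂ : Matrix (V₂ ⊕ V₂) V₂ ℤ) :
    l.foldl emut (extSum E₁ E₂) =
      extSum ((l.filterMap Sum.getLeft?).foldl emut E₁)
        ((l.filterMap Sum.getRight?).foldl emut E₂) := by
  induction l generalizing E₁ E₂ with
  | nil => rfl
  | cons k l ih =>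
    rcases k with k | k
    · simpa [emut_extSum_inl, List.filterMap_cons] using ih (emut E₁ k) E₂
    · simpa [emut_extSum_inr, List.filterMap_cons] using ih E₁ (emut E₂ k)

theorem isGreenSeq_extSum_iff (l : List (V₁ ⊕ V₂)) (E₁ : Matrix (V₁ ⊕ V₁) V₁ ℤ)
    (E₂ : Matrix (V₂ ⊕ V₂) V₂ ℤ) :
    IsGreenSeq (extSum E₁ E₂) l ↔
      IsGreenSeq E₁ (l.filterMap Sum.getLeft?) ∧ IsGreenSeq E₂ (l.filterMap Sum.getRight?) := by
  induction l generalizing E₁ E₂ with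
  | nil => simp [IsGreenSeq]
  | cons k l ih =>
    rcases k with k | k
    · simp [IsGreenSeq, isGreen_extSum_inl, emut_extSum_inl, ih, List.filterMap_cons, and_assoc]
    · simp [IsGreenSeq, isGreen_extSum_inr, emut_extSum_inr, ih, List.filterMap_cons, and_left_comm]

theorem isMaximalGreenSeq_fromBlocks_iff (B₁ : Matrix V₁ V₁ ℤ) (B₂ : Matrix V₂ V₂ ℤ)
    (l : List (V₁ ⊕ V₂)) :
    IsMaximalGreenSeq (Matrix.fromBlocks B₁ 0 0 B₂) l ↔
      IsMaximalGreenSeq B₁ (l.filterMap Sum.getLeft?) ∧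
        IsMaximalGreenSeq B₂ (l.filterMap Sum.getRight?) := by
  simp only [IsMaximalGreenSeq, framed_fromBlocks, isGreenSeq_extSum_iff, foldl_emut_extSum,
    forall_isRed_extSum_iff]
  exact and_and_and_comm

end DisjointUnion

theorem disjoint_union_mgs_general {V₁ V₂ : Type} [DecidableEq V₁] [DecidableEq V₂]
    (B₁ : Matrix V₁ V₁ ℤ) (B₂ : Matrix V₂ V₂ ℤ) :
    ((∃ l, IsMaximalGreenSeq (Matrix.fromBlocks B₁ 0 0 B₂) l) ↔
      (∃ l₁, IsMaximalGreenSeq B₁ l₁) ∧ (∃ l₂, IsMaximalGreenSeq B₂ l₂)) ∧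
    (∀ (l₁ : List V₁) (l₂ : List V₂), IsMaximalGreenSeq B₁ l₁ →
      IsMaximalGreenSeq B₂ l₂ →
      IsMaximalGreenSeq (Matrix.fromBlocks B₁ 0 0 B₂)
        (l₁.map Sum.inl ++ l₂.map Sum.inr)) := by
  have concat (l₁ : List V₁) (l₂ : List V₂) (h₁ : IsMaximalGreenSeq B₁ l₁)
      (h₂ : IsMaximalGreenSeq B₂ l₂) :
      IsMaximalGreenSeq (Matrix.fromBlocks B₁ 0 0 B₂) (l₁.map Sum.inl ++ l₂.map Sum.inr) := by
    rw [isMaximalGreenSeq_fromBlocks_iff]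
    simpa [List.filterMap_map, Function.comp_def] using And.intro h₁ h₂
  refine ⟨⟨fun ⟨l, hl⟩ => ?_, fun ⟨⟨l₁, h₁⟩, ⟨l₂, h₂⟩⟩ => ⟨_, concat l₁ l₂ h₁ h₂⟩⟩, concat⟩
  obtain ⟨h₁, h₂⟩ := (isMaximalGreenSeq_fromBlocks_iff B₁ B₂ l).1 hl
  exact ⟨⟨_, h₁⟩, ⟨_, h₂⟩⟩

/-- a disjoint union of two quivers has a maximal green
sequence if and only if both parts do; moreover concatenating maximal green
sequences of the parts gives one for the disjoint union. -/
theorem disjoint_union_mgs {V₁ V₂ : Type} [Fintype V₁] [DecidableEq V₁]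
    [Fintype V₂] [DecidableEq V₂]
    (B₁ : Matrix V₁ V₁ ℤ) (B₂ : Matrix V₂ V₂ ℤ)
    (h₁ : B₁.transpose = -B₁) (h₂ : B₂.transpose = -B₂) :
    ((∃ l, IsMaximalGreenSeq (Matrix.fromBlocks B₁ 0 0 B₂) l) ↔
      (∃ l₁, IsMaximalGreenSeq B₁ l₁) ∧ (∃ l₂, IsMaximalGreenSeq B₂ l₂)) ∧
    (∀ (l₁ : List V₁) (l₂ : List V₂), IsMaximalGreenSeq B₁ l₁ →
      IsMaximalGreenSeq B₂ l₂ →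
      IsMaximalGreenSeq (Matrix.fromBlocks B₁ 0 0 B₂)
        (l₁.map Sum.inl ++ l₂.map Sum.inr)) :=
  disjoint_union_mgs_general B₁ B₂
end Aux
end
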